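/- Let G be a finite, simple, connected, undirected graph on n vertices, weighted with the minimum-degree weighting scheme. Then for every pair of vertices u, v, the hitting time of the weighted random walk satisfies H[u,v] ≤ 6n². -/

import Mathlib

open Finset Filter Classical
open scoped ENNReal

noncomputable section

variable {V : Type*} [Fintype V] [DecidableEq V]

/-- Degree of a vertex in a simple graph. -/
def gdeg (G : SimpleGraph V) (u : V) : ℕ :=
  (Finset.univ.filter (fun v => G.Adj u v)).card

/-- Transition probabilities of the simple random walk on `G`. -/
def srw (G : SimpleGraph V) (u v : V) : ℝ :=
  if G.Adj u v then ((gdeg G u : ℝ))⁻¹ else 0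

/-- Probability weight of a trajectory under the transition kernel `P`. -/
def stepWeight (P : V → V → ℝ) {t : ℕ} (f : Fin (t + 1) → V) : ℝ :=
  ∏ i : Fin t, P (f i.castSucc) (f i.succ)

/-- Probability that the `t`-step trajectory of the chain `P` started at `u`
satisfies the predicate `A`. -/
def eventProb (P : V → V → ℝ) (u : V) (t : ℕ) (A : (Fin (t + 1) → V) → Prop) : ℝ :=
  ∑ f : Fin (t + 1) → V, if f 0 = u ∧ A f then stepWeight P f else 0

/-- Expected hitting time `H[u,v]`, via `E[T] = ∑_t Pr(T > t)`. -/
def hitTime (P : V → V → ℝ) (u v : V) : ℝ≥0∞ :=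
  ∑' t : ℕ, ENNReal.ofReal (eventProb P u t (fun f => ∀ i, f i ≠ v))

/-- Expected cover time starting from `u`. -/
def coverTimeFrom (P : V → V → ℝ) (u : V) : ℝ≥0∞ :=
  ∑' t : ℕ, ENNReal.ofReal (eventProb P u t (fun f => ∃ v, ∀ i, f i ≠ v))

/-- The cover time `COV`: maximum over starting vertices of the expected cover time. -/
def coverTime (P : V → V → ℝ) : ℝ≥0∞ := ⨆ u, coverTimeFrom P u

/-- Stationary probability of `v` for the simple random walk: `d(v)/(2|E|)`. -/
def statPi (G : SimpleGraph V) (v : V) : ℝ := (gdeg G v : ℝ) / (∑ u, (gdeg G u : ℝ))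

/-- Number of visits to `w` in a trajectory. -/
def visits {t : ℕ} (f : Fin (t + 1) → V) (w : V) : ℕ :=
  (Finset.univ.filter (fun i => f i = w)).card

/-- The blanket-cover time `BCOV[G]`. -/
def blanketCoverTime (G : SimpleGraph V) : ℝ≥0∞ :=
  ⨆ u, ∑' t : ℕ, ENNReal.ofReal (eventProb (srw G) u t
    (fun f => ∃ w, (visits f w : ℝ≥0∞) < ENNReal.ofReal (statPi G w) * coverTime (srw G)))

/-- Minimum degree. -/
def minDeg (G : SimpleGraph V) : ℕ := sInf (Set.range (gdeg G))

/-- Maximum degree. -/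
def maxDeg (G : SimpleGraph V) : ℕ := Finset.univ.sup (gdeg G)

/-- Number of edges (by the handshaking lemma). -/
def edgeCount (G : SimpleGraph V) : ℕ := (∑ v, gdeg G v) / 2

/-- Diameter. -/
def gdiam (G : SimpleGraph V) : ℕ := Finset.univ.sup (fun p : V × V => G.dist p.1 p.2)

/-- Effective resistance between `u` and `v`, all edges having unit resistance:
the reciprocal of the effective conductance, the latter given by the Dirichlet
variational principle. -/
def effRes (G : SimpleGraph V) (u v : V) : ℝ :=
  (sInf {e : ℝ | ∃ f : V → ℝ, f u = 1 ∧ f v = 0 ∧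
      e = (∑ x, ∑ y, if G.Adj x y then (f x - f y) ^ 2 else 0) / 2})⁻¹

/-- Maximum effective resistance over pairs of vertices. -/
def Rmax (G : SimpleGraph V) : ℝ := sSup {r : ℝ | ∃ u v, r = effRes G u v}


/-- Transition probability of the weighted random walk on the weighted graph `(G, w)`:
`P_{u,v} = w(u,v)/w(u)`. -/
def wP (G : SimpleGraph V) (w : V → V → ℝ) (u v : V) : ℝ :=
  (if G.Adj u v then w u v else 0) / (∑ x, if G.Adj u x then w u x else 0)

/-- The minimum-degree weighting scheme: each edge `(u,v)` gets weight
`1/min{d(u),d(v)}`. -/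
def mindegWeight (G : SimpleGraph V) (u v : V) : ℝ :=
  ((min (gdeg G u) (gdeg G v) : ℕ) : ℝ)⁻¹

/-- Transition probabilities of the minimum-degree weighted random walk. -/
def mindegP (G : SimpleGraph V) : V → V → ℝ := wP G (mindegWeight G)

end

/-!
The hitting time of `v` is bounded by any nonnegative `g` with `1 + P g ≤ g` off `v`. Take for `g`
the potential `h` with `h v = 0` and `L h = w` off `v`, where `L` is the weighted Laplacian and
`w x = ∑_y w(x, y)`; it satisfies `1 + P h = h` off `v`. If `h` is maximal at `z`, Cauchy–Schwarz
along a shortest `z`–`v` path `p` together with the energy identity gives `h z ≤ R(p) W`, where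
`R(p) = ∑_{xy ∈ p} min(d x, d y)` is the resistance of `p` and `W = ∑_x w x` the total weight.
A vertex is adjacent to at most three vertices of a shortest path, so `R(p) ≤ 3n`, and
`1 / min(d x, d y) ≤ 1 / d x + 1 / d y` gives `W ≤ 2n`.
-/

open SimpleGraph

section HittingTime

variable {V : Type*} [Fintype V] [DecidableEq V] (P : V → V → ℝ)

omit [Fintype V] [DecidableEq V] in
lemma stepWeight_cons (a : V) {t : ℕ} (f : Fin (t + 1) → V) :
    stepWeight P (Fin.cons a f : Fin (t + 2) → V) = P a (f 0) * stepWeight P f := by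
  simp only [stepWeight, Fin.prod_univ_succ, Fin.castSucc_zero, Fin.cons_zero, Fin.cons_succ,
    ← Fin.succ_castSucc]

lemma eventProb_avoid_succ {u v : V} (huv : u ≠ v) (t : ℕ) :
    eventProb P u (t + 1) (fun f => ∀ i, f i ≠ v)
      = ∑ y, P u y * eventProb P y t (fun f => ∀ i, f i ≠ v) := by
  have hcons (a : V) (f : Fin (t + 1) → V) : (Fin.consEquiv fun _ => V) (a, f) = Fin.cons a f :=
    rfl
  simp only [eventProb, mul_sum, mul_ite, mul_zero]
  rw [← (Fin.consEquiv fun _ : Fin (t + 2) => V).sum_comp, Fintype.sum_prod_type, sum_comm]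
  simp only [Fin.forall_fin_succ, hcons, stepWeight_cons, Fin.cons_zero, Fin.cons_succ, ite_and]
  rw [sum_comm (γ := V)]
  simp [huv]

lemma eventProb_nonneg (hP : ∀ x y, 0 ≤ P x y) (u : V) (t : ℕ)
    (A : (Fin (t + 1) → V) → Prop) : 0 ≤ eventProb P u t A :=
  sum_nonneg fun f _ => by
    split_ifs
    exacts [prod_nonneg fun i _ => hP _ _, le_rfl]

lemma eventProb_avoid_self (v : V) (t : ℕ) :
    eventProb P v t (fun f => ∀ i, f i ≠ v) = 0 :=
  sum_eq_zero fun _ _ => if_neg fun h => h.2 0 h.1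

lemma eventProb_avoid_zero {u v : V} (huv : u ≠ v) :
    eventProb P u 0 (fun f => ∀ i, f i ≠ v) = 1 := by
  rw [eventProb, ← (Equiv.funUnique (Fin 1) V).symm.sum_comp, sum_eq_single u]
  · simp [stepWeight, huv]
  · intro x _ hx
    simp [hx]
  · simp

lemma sum_range_eventProb_avoid_le (hP : ∀ x y, 0 ≤ P x y) {v : V} {g : V → ℝ}
    (hg : ∀ x, 0 ≤ g x) (hPg : ∀ x, x ≠ v → 1 + ∑ y, P x y * g y ≤ g x) (T : ℕ) (u : V) :
    ∑ t ∈ range T, eventProb P u t (fun f => ∀ i, f i ≠ v) ≤ g u := by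
  induction T generalizing u with
  | zero => simpa using hg u
  | succ T ih =>
    by_cases huv : u = v
    · subst huv
      simpa [eventProb_avoid_self] using hg u
    · calc ∑ t ∈ range (T + 1), eventProb P u t (fun f => ∀ i, f i ≠ v)
          = 1 + ∑ y, P u y * ∑ t ∈ range T, eventProb P y t (fun f => ∀ i, f i ≠ v) := by
            simp only [sum_range_succ', eventProb_avoid_succ P huv, eventProb_avoid_zero P huv,
              mul_sum]
            rw [sum_comm, add_comm]
        _ ≤ 1 + ∑ y, P u y * g y := by
            gcongr with y
            exacts [hP u y, ih y]
        _ ≤ g u := hPg u huv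

lemma hitTime_le_of_supersolution (hP : ∀ x y, 0 ≤ P x y) {v : V} {g : V → ℝ}
    (hg : ∀ x, 0 ≤ g x) (hPg : ∀ x, x ≠ v → 1 + ∑ y, P x y * g y ≤ g x) (u : V) :
    hitTime P u v ≤ ENNReal.ofReal (g u) := by
  refine ENNReal.tsum_le_of_sum_range_le fun T => ?_
  rw [← ENNReal.ofReal_sum_of_nonneg fun t _ => eventProb_nonneg P hP u t _]
  exact ENNReal.ofReal_le_ofReal (sum_range_eventProb_avoid_le P hP hg hPg T u)

end HittingTime

section Laplacian

variable {V : Type*} [Fintype V] (c : V → V → ℝ)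

noncomputable def weightedLaplacian (h : V → ℝ) (x : V) : ℝ := ∑ y, c x y * (h x - h y)

lemma sum_sum_mul_sq_sub_eq (hc : ∀ x y, c x y = c y x) (h : V → ℝ) :
    ∑ x, ∑ y, c x y * (h x - h y) ^ 2 = 2 * ∑ x, h x * weightedLaplacian c h x := by
  calc ∑ x, ∑ y, c x y * (h x - h y) ^ 2
      = ∑ x, ∑ y, h x * (c x y * (h x - h y)) + ∑ x, ∑ y, h y * (c y x * (h y - h x)) := by
        rw [← sum_add_distrib]
        refine sum_congr rfl fun x _ => ?_
        rw [← sum_add_distrib]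
        refine sum_congr rfl fun y _ => ?_
        rw [hc y x]
        ring
    _ = 2 * ∑ x, h x * weightedLaplacian c h x := by
        rw [sum_comm (f := fun x y => h y * (c y x * (h y - h x)))]
        rw [two_mul]
        simp only [weightedLaplacian, mul_sum]

lemma nonneg_of_weightedLaplacian_pos (hc : ∀ x y, 0 ≤ c x y) {h : V → ℝ} {v : V}
    (hv : h v = 0) (hpos : ∀ x, x ≠ v → 0 < weightedLaplacian c h x) (x : V) : 0 ≤ h x := by
  obtain ⟨m, -, hm⟩ := exists_min_image univ h ⟨v, mem_univ v⟩
  by_contra! hx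
  have hmv : m ≠ v := by
    rintro rfl
    linarith [hm x (mem_univ x)]
  refine (hpos m hmv).not_ge (sum_nonpos fun y _ => ?_)
  exact mul_nonpos_of_nonneg_of_nonpos (hc m y) (sub_nonpos.2 (hm y (mem_univ y)))

variable {G : SimpleGraph V}

omit [Fintype V] in
lemma SimpleGraph.Preconnected.eq_of_forall_adj (hG : G.Preconnected) {α : Type*} {f : V → α}
    (hf : ∀ x y, G.Adj x y → f x = f y) (x y : V) : f x = f y := by
  obtain ⟨p⟩ := hG x y
  induction p with
  | nil => rfl
  | cons hxy _ ih => exact (hf _ _ hxy).trans ih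

lemma eq_zero_of_weightedLaplacian_eq_zero (hG : G.Connected) (hsymm : ∀ x y, c x y = c y x)
    (hc : ∀ x y, 0 ≤ c x y) (hpos : ∀ x y, G.Adj x y → 0 < c x y) {h : V → ℝ} {v : V}
    (hv : h v = 0) (hzero : ∀ x, x ≠ v → weightedLaplacian c h x = 0) : h = 0 := by
  have henergy : ∑ x, ∑ y, c x y * (h x - h y) ^ 2 = 0 := by
    rw [sum_sum_mul_sq_sub_eq c hsymm]
    refine mul_eq_zero_of_right _ (sum_eq_zero fun x _ => ?_)
    rcases eq_or_ne x v with rfl | hx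
    · rw [hv, zero_mul]
    · rw [hzero x hx, mul_zero]
  have hterm (x y : V) : c x y * (h x - h y) ^ 2 = 0 := by
    have hnn (x y : V) : 0 ≤ c x y * (h x - h y) ^ 2 := mul_nonneg (hc x y) (sq_nonneg _)
    exact (sum_eq_zero_iff_of_nonneg fun y _ => hnn x y).1
      ((sum_eq_zero_iff_of_nonneg fun x _ => sum_nonneg fun y _ => hnn x y).1 henergy x
        (mem_univ x)) y (mem_univ y)
  have hadj (x y : V) (hxy : G.Adj x y) : h x = h y := by
    simpa [(hpos x y hxy).ne', sub_eq_zero] using hterm x y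
  funext x
  rw [hG.preconnected.eq_of_forall_adj hadj x v, hv, Pi.zero_apply]

/-- The map `h ↦ (h v, (L h) x for x ≠ v)` is injective by the energy identity, hence
surjective. -/
lemma exists_weightedLaplacian_eq (hG : G.Connected) (hsymm : ∀ x y, c x y = c y x)
    (hc : ∀ x y, 0 ≤ c x y) (hpos : ∀ x y, G.Adj x y → 0 < c x y) (v : V) (b : V → ℝ) :
    ∃ h : V → ℝ, h v = 0 ∧ ∀ x, x ≠ v → weightedLaplacian c h x = b x := by
  let L : (V → ℝ) →ₗ[ℝ] (V → ℝ) :=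
    { toFun := fun h x => if x = v then h v else weightedLaplacian c h x
      map_add' := fun f g => by
        ext x
        by_cases hx : x = v
        · simp [hx]
        · simp [hx, weightedLaplacian, mul_sub, sum_sub_distrib, sum_add_distrib, mul_add]
          ring
      map_smul' := fun r f => by
        ext x
        by_cases hx : x = v
        · simp [hx]
        · simp [hx, weightedLaplacian, mul_sub, sum_sub_distrib, mul_sum, mul_left_comm] }
  have hL : Function.Injective L := by
    rw [← LinearMap.ker_eq_bot, LinearMap.ker_eq_bot']
    intro h hh
    have hx := congrFun hh
    refine eq_zero_of_weightedLaplacian_eq_zero c hG hsymm hc hpos (v := v) ?_ fun x hxv => ?_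
    · simpa [L] using hx v
    · simpa [L, hxv] using hx x
  obtain ⟨h, hh⟩ := LinearMap.injective_iff_surjective.1 hL (fun x => if x = v then 0 else b x)
  refine ⟨h, by simpa [L] using congrFun hh v, fun x hxv => ?_⟩
  simpa [L, hxv] using congrFun hh x

lemma one_add_sum_div_mul_eq {h : V → ℝ} {x : V}
    (hx : 0 < ∑ y, c x y) (hL : weightedLaplacian c h x = ∑ y, c x y) :
    1 + ∑ y, c x y / (∑ z, c x z) * h y = h x := by
  have hsum : ∑ y, c x y * h y = (∑ y, c x y) * (h x - 1) := by
    simp only [weightedLaplacian, mul_sub, sum_sub_distrib, ← sum_mul] at hL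
    linarith
  simp only [div_mul_eq_mul_div, ← sum_div, hsum]
  field_simp
  ring

end Laplacian

section PathBound

lemma add_sq_le_of_sq_le_mul {c R E Δ S : ℝ} (hc : 0 < c) (hR : 0 ≤ R) (hE : 0 ≤ E)
    (h : S ^ 2 ≤ R * E) : (Δ + S) ^ 2 ≤ (c⁻¹ + R) * (c * Δ ^ 2 + E) := by
  have hq : 2 * (c * Δ) * S ≤ R * (c * Δ) ^ 2 + E := by
    rcases hR.eq_or_lt with rfl | hR
    · nlinarith [sq_nonneg S]
    · nlinarith [sq_nonneg (R * (c * Δ) - S)]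
  have hcc : c⁻¹ * c = 1 := inv_mul_cancel₀ hc.ne'
  linear_combination mul_le_mul_of_nonneg_left hq (inv_nonneg.2 hc.le) + h
    - (Δ ^ 2 - R * c * Δ ^ 2 + 2 * Δ * S) * hcc

variable {V : Type*} {G : SimpleGraph V} (c : V → V → ℝ)

noncomputable def walkResistance {a b : V} (p : G.Walk a b) : ℝ :=
  (p.darts.map fun d => (c d.fst d.snd)⁻¹).sum

lemma walkResistance_nonneg (hpos : ∀ x y, G.Adj x y → 0 < c x y) {a b : V} (p : G.Walk a b) :
    0 ≤ walkResistance c p :=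
  List.sum_nonneg fun r hr => by
    obtain ⟨d, -, rfl⟩ := List.mem_map.1 hr
    exact (inv_pos.2 (hpos _ _ d.adj)).le

lemma sq_sub_le_walkResistance_mul (hpos : ∀ x y, G.Adj x y → 0 < c x y) (h : V → ℝ)
    {a b : V} (p : G.Walk a b) :
    (h a - h b) ^ 2 ≤
      walkResistance c p * (p.darts.map fun d => c d.fst d.snd * (h d.fst - h d.snd) ^ 2).sum := by
  induction p with
  | nil => simp [walkResistance]
  | @cons x y z hxy q ih =>
    have hE : 0 ≤ (q.darts.map fun d => c d.fst d.snd * (h d.fst - h d.snd) ^ 2).sum :=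
      List.sum_nonneg fun r hr => by
        obtain ⟨d, -, rfl⟩ := List.mem_map.1 hr
        exact mul_nonneg (hpos _ _ d.adj).le (sq_nonneg _)
    simpa [walkResistance, sub_add_sub_cancel] using add_sq_le_of_sq_le_mul (Δ := h x - h y)
      (hpos x y hxy) (walkResistance_nonneg c hpos q) hE ih

variable [Fintype V]

lemma two_mul_sum_darts_le {F : V → V → ℝ} (hF : ∀ x y, 0 ≤ F x y)
    (hsymm : ∀ x y, F x y = F y x) {a b : V} {p : G.Walk a b} (hp : p.IsTrail) :
    2 * (p.darts.map fun d => F d.fst d.snd).sum ≤ ∑ x, ∑ y, F x y := by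
  set l := (p.darts ++ p.darts.map Dart.symm).map Dart.toProd
  have hedges : (p.darts.map Dart.edge).Nodup := hp.edges_nodup
  have hdarts : p.darts.Nodup := hedges.of_map _
  have hl : l.Nodup := by
    refine (List.nodup_append.2 ⟨hdarts, hdarts.map Dart.symm_involutive.injective,
      ?_⟩).map Dart.toProd_injective
    rintro d hd _ hd' rfl
    obtain ⟨e, he, rfl⟩ := List.mem_map.1 hd'
    exact e.symm_ne (List.inj_on_of_nodup_map hedges hd he e.edge_symm)
  calc 2 * (p.darts.map fun d => F d.fst d.snd).sum = (l.map fun e => F e.1 e.2).sum := by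
        simp [l, two_mul, Function.comp_def, hsymm]
    _ = ∑ e ∈ l.toFinset, F e.1 e.2 := (List.sum_toFinset _ hl).symm
    _ ≤ ∑ e : V × V, F e.1 e.2 := sum_le_univ_sum_of_nonneg fun e => hF _ _
    _ = ∑ x, ∑ y, F x y := Fintype.sum_prod_type _

/-- Cauchy–Schwarz gives `h z ^ 2 ≤ R(p) E(p)`, and the energy `E(p)` along the trail is at most
half the total energy `2 ∑ h · L h ≤ 2 h(z) W`. -/
lemma le_walkResistance_mul_of_weightedLaplacian_eq (hsymm : ∀ x y, c x y = c y x)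
    (hc : ∀ x y, 0 ≤ c x y) (hpos : ∀ x y, G.Adj x y → 0 < c x y) {h : V → ℝ} {v z : V}
    (hv : h v = 0) (hL : ∀ x, x ≠ v → weightedLaplacian c h x = ∑ y, c x y)
    (hz : ∀ y, h y ≤ h z) (p : G.Walk z v) (hp : p.IsTrail) :
    h z ≤ walkResistance c p * ∑ x, ∑ y, c x y := by
  set W := ∑ x, ∑ y, c x y
  set E := (p.darts.map fun d => c d.fst d.snd * (h d.fst - h d.snd) ^ 2).sum
  have hz0 : 0 ≤ h z := hv ▸ hz v
  have hW : 0 ≤ W := sum_nonneg fun x _ => sum_nonneg fun y _ => hc x y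
  have hE : E ≤ h z * W := by
    have htrail := two_mul_sum_darts_le
      (fun x y => mul_nonneg (hc x y) (sq_nonneg (h x - h y)))
      (fun x y => by rw [hsymm, ← neg_sub, neg_sq]) hp
    have hcharge : ∑ x, h x * weightedLaplacian c h x ≤ ∑ x, h z * ∑ y, c x y := by
      refine sum_le_sum fun x _ => ?_
      rcases eq_or_ne x v with rfl | hx
      · rw [hv, zero_mul]
        exact mul_nonneg hz0 (sum_nonneg fun y _ => hc x y)
      · rw [hL x hx]
        exact mul_le_mul_of_nonneg_right (hz x) (sum_nonneg fun y _ => hc x y)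
    rw [sum_sum_mul_sq_sub_eq c hsymm] at htrail
    rw [← mul_sum] at hcharge
    linarith
  have hCS : h z ^ 2 ≤ walkResistance c p * E := by
    simpa [hv] using sq_sub_le_walkResistance_mul c hpos h p
  rcases hz0.eq_or_lt with hz0 | hz0
  · rw [← hz0]
    exact mul_nonneg (walkResistance_nonneg c hpos p) hW
  · refine le_of_mul_le_mul_right ?_ hz0
    nlinarith [walkResistance_nonneg c hpos p]

end PathBound

section WeightedWalk

variable {V : Type*} [Fintype V] {G : SimpleGraph V} {w : V → V → ℝ}

/-- The conductances of `(G, w)`; `wP G w` is by definition their row normalisation. -/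
noncomputable def adjWeight (G : SimpleGraph V) (w : V → V → ℝ) (x y : V) : ℝ :=
  if G.Adj x y then w x y else 0

variable [DecidableEq V]

theorem hitTime_wP_le (hG : G.Connected) (hsymm : ∀ x y, w x y = w y x)
    (hpos : ∀ x y, G.Adj x y → 0 < w x y) {v : V} {B : ℝ}
    (hB : ∀ z, ∃ p : G.Walk z v, p.IsTrail ∧ walkResistance (adjWeight G w) p ≤ B) (u : V) :
    hitTime (wP G w) u v ≤ ENNReal.ofReal (B * ∑ x, ∑ y, adjWeight G w x y) := by
  set c := adjWeight G w
  have hc_symm (x y : V) : c x y = c y x := by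
    simp only [c, adjWeight, G.adj_comm x y, hsymm x y]
  have hc_pos (x y : V) (hxy : G.Adj x y) : 0 < c x y := by
    simpa [c, adjWeight, hxy] using hpos x y hxy
  have hc (x y : V) : 0 ≤ c x y := by
    by_cases hxy : G.Adj x y
    · exact (hc_pos x y hxy).le
    · simp [c, adjWeight, hxy]
  have hdeg (x : V) (hx : x ≠ v) : 0 < ∑ y, c x y := by
    have : Nontrivial V := ⟨⟨x, v, hx⟩⟩
    obtain ⟨y, hxy⟩ := hG.preconnected.exists_adj_of_nontrivial x
    exact (hc_pos x y hxy).trans_le (single_le_sum (fun y _ => hc x y) (mem_univ y))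
  obtain ⟨h, hv, hL⟩ := exists_weightedLaplacian_eq c hG hc_symm hc hc_pos v fun x => ∑ y, c x y
  obtain ⟨z, -, hz⟩ := exists_max_image univ h ⟨v, mem_univ v⟩
  obtain ⟨p, hp, hpB⟩ := hB z
  have hh : ∀ x, 0 ≤ h x :=
    nonneg_of_weightedLaplacian_pos c hc hv fun x hx => (hL x hx).symm ▸ hdeg x hx
  have hmax := le_walkResistance_mul_of_weightedLaplacian_eq c hc_symm hc hc_pos hv hL
    (fun y => hz y (mem_univ y)) p hp
  have hW : 0 ≤ ∑ x, ∑ y, c x y := sum_nonneg fun x _ => sum_nonneg fun y _ => hc x y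
  have hP (x y : V) : 0 ≤ wP G w x y := div_nonneg (hc x y) (sum_nonneg fun y _ => hc x y)
  calc hitTime (wP G w) u v ≤ ENNReal.ofReal (h u) :=
        hitTime_le_of_supersolution _ hP hh
          (fun x hx => (one_add_sum_div_mul_eq c (hdeg x hx) (hL x hx)).le) u
    _ ≤ ENNReal.ofReal (B * ∑ x, ∑ y, c x y) := ENNReal.ofReal_le_ofReal <|
        (hz u (mem_univ u)).trans (hmax.trans (mul_le_mul_of_nonneg_right hpB hW))

end WeightedWalk

section MinDegree

variable {V : Type*} [Fintype V] {G : SimpleGraph V}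

lemma gdeg_pos_of_adj {x y : V} (h : G.Adj x y) : 0 < gdeg G x :=
  card_pos.2 ⟨y, mem_filter.2 ⟨mem_univ y, h⟩⟩

lemma mindegWeight_comm (x y : V) : mindegWeight G x y = mindegWeight G y x := by
  rw [mindegWeight, mindegWeight, min_comm]

lemma mindegWeight_pos_of_adj {x y : V} (h : G.Adj x y) : 0 < mindegWeight G x y := by
  have := lt_min (gdeg_pos_of_adj h) (gdeg_pos_of_adj h.symm)
  unfold mindegWeight
  positivity

/-- `1 / min(d x, d y) ≤ 1 / d x + 1 / d y`, and each vertex `x` receives total weight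
`∑_{y ∼ x} 1 / d x ≤ 1` from the first terms. -/
lemma sum_sum_adjWeight_mindegWeight_le :
    ∑ x, ∑ y, adjWeight G (mindegWeight G) x y ≤ 2 * Fintype.card V := by
  set a : V → V → ℝ := fun x y => if G.Adj x y then (gdeg G x : ℝ)⁻¹ else 0
  have hle (x y : V) : adjWeight G (mindegWeight G) x y ≤ a x y + a y x := by
    by_cases hxy : G.Adj x y
    · simp only [adjWeight, mindegWeight, a, hxy, hxy.symm, if_true]
      rcases min_cases (gdeg G x) (gdeg G y) with ⟨hm, -⟩ | ⟨hm, -⟩ <;>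
        rw [hm] <;> simp
    · simp [adjWeight, a, hxy, G.adj_comm y x]
  have hrow (x : V) : ∑ y, a x y ≤ 1 := by
    simp only [a, ← sum_filter, sum_const, nsmul_eq_mul]
    exact mul_inv_le_one
  calc ∑ x, ∑ y, adjWeight G (mindegWeight G) x y ≤ ∑ x, ∑ y, (a x y + a y x) :=
        sum_le_sum fun x _ => sum_le_sum fun y _ => hle x y
    _ = 2 * ∑ x, ∑ y, a x y := by
        simp only [sum_add_distrib, two_mul]
        exact congrArg _ sum_comm
    _ ≤ 2 * ∑ _x : V, (1 : ℝ) := by gcongr with x; exact hrow x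
    _ = 2 * Fintype.card V := by simp

omit [Fintype V] in
lemma SimpleGraph.Walk.getVert_dist_eq_of_length_eq_dist {a b x : V}
    {p : G.Walk a b} (hp : p.length = G.dist a b) (hx : x ∈ p.support) :
    p.getVert (G.dist a x) = x := by
  rw [← length_eq_dist_of_subwalk hp (p.isSubwalk_takeUntil hx), p.getVert_length_takeUntil hx]

/-- Along a shortest path, a vertex `y` is adjacent only to path vertices at distance
`d(a, y) - 1`, `d(a, y)` or `d(a, y) + 1` from the start `a`, so every vertex is counted at most
three times in the degree sum. -/
lemma sum_gdeg_support_le_of_length_eq_dist {a b : V} {p : G.Walk a b}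
    (hp : p.length = G.dist a b) : ∑ x ∈ p.support.toFinset, gdeg G x ≤ 3 * Fintype.card V := by
  have hcount (y : V) : (p.support.toFinset.filter (G.Adj · y)).card ≤ 3 := by
    have hmaps : Set.MapsTo (G.dist a) (p.support.toFinset.filter (G.Adj · y))
        ({G.dist a y - 1, G.dist a y, G.dist a y + 1} : Finset ℕ) := by
      intro x hx
      have := (mem_filter.1 hx).2.symm.diff_dist_adj (u := a)
      simp only [coe_insert, coe_singleton, Set.mem_insert_iff, Set.mem_singleton_iff]
      omega
    have hinj : Set.InjOn (G.dist a) (p.support.toFinset.filter (G.Adj · y)) := by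
      intro x hx x' hx' hxx'
      rw [← Walk.getVert_dist_eq_of_length_eq_dist hp
          (List.mem_toFinset.1 (mem_filter.1 hx).1),
        ← Walk.getVert_dist_eq_of_length_eq_dist hp
          (List.mem_toFinset.1 (mem_filter.1 hx').1), hxx']
    exact (card_le_card_of_injOn _ hmaps hinj).trans card_le_three
  calc ∑ x ∈ p.support.toFinset, gdeg G x
      = ∑ y, (p.support.toFinset.filter (G.Adj · y)).card := by
        simp only [gdeg, card_eq_sum_ones, sum_filter]
        exact sum_comm
    _ ≤ ∑ _y : V, 3 := sum_le_sum fun y _ => hcount y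
    _ = 3 * Fintype.card V := by simp [mul_comm]

lemma walkResistance_mindegWeight_le {a b : V} {p : G.Walk a b} (hp : p.length = G.dist a b) :
    walkResistance (adjWeight G (mindegWeight G)) p ≤ 3 * Fintype.card V := by
  have hres : walkResistance (adjWeight G (mindegWeight G)) p
      = ((p.darts.map fun d => min (gdeg G d.fst) (gdeg G d.snd)).sum : ℕ) := by
    rw [walkResistance, Nat.cast_list_sum, List.map_map]
    exact congrArg _ (List.map_congr_left fun d _ => by simp [adjWeight, mindegWeight, d.adj])
  rw [hres]
  exact_mod_cast calc (p.darts.map fun d => min (gdeg G d.fst) (gdeg G d.snd)).sum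
      ≤ (p.darts.map fun d => gdeg G d.fst).sum := List.sum_le_sum fun d _ => min_le_left _ _
    _ = (p.support.dropLast.map (gdeg G)).sum := by rw [← p.map_fst_darts, List.map_map]; rfl
    _ ≤ (p.support.map (gdeg G)).sum :=
        ((List.dropLast_sublist _).map _).sum_le_sum fun _ _ => Nat.zero_le _
    _ = ∑ x ∈ p.support.toFinset, gdeg G x :=
        (List.sum_toFinset _ (p.isPath_of_length_eq_dist hp).support_nodup).symm
    _ ≤ 3 * Fintype.card V := sum_gdeg_support_le_of_length_eq_dist hp

end MinDegree

/-- For a finite, simple, connected graph `G` on `n` vertices weighted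
with the minimum-degree weighting scheme, `H[u,v] ≤ 6n²` for all vertices `u, v`. -/
theorem mindeg_hitTime_le
    {V : Type*} [Fintype V] [DecidableEq V] (G : SimpleGraph V) (hG : G.Connected)
    (u v : V) :
    hitTime (mindegP G) u v ≤ ENNReal.ofReal (6 * (Fintype.card V : ℝ) ^ 2) := by
  have hgeodesic (z : V) : ∃ p : G.Walk z v, p.IsTrail ∧
      walkResistance (adjWeight G (mindegWeight G)) p ≤ 3 * Fintype.card V := by
    obtain ⟨p, hp, hlen⟩ := hG.exists_path_of_dist z v
    exact ⟨p, hp.isTrail, walkResistance_mindegWeight_le hlen⟩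
  refine (hitTime_wP_le hG mindegWeight_comm (fun _ _ => mindegWeight_pos_of_adj) hgeodesic
    u).trans (ENNReal.ofReal_le_ofReal ?_)
  have hW := sum_sum_adjWeight_mindegWeight_le (G := G)
  nlinarith [(Fintype.card V).cast_nonneg (α := ℝ)]
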